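/- Let R(i) be a prefix-minimum vertex of R and B(j) a prefix-minimum vertex of B. Then there exists a prefix-minima Fréchet matching between R|[1, i] and B|[1, j]: nondecreasing surjections f : [0,1] → [1, i] and g : [0,1] → [1, j] such that sup_{t ∈ [0,1]} |R(f(t)) − B(g(t))| ≤ d_F(R|[1, i], B|[1, j]) and, for every t ∈ [0,1], either R(f(t)) ≥ R(x) for all x ∈ [1, f(t)], or B(g(t)) ≤ B(y) for all y ∈ [1, g(t)] (at each time at least one of the two matched points is a prefix-minimum point of its curve). -/

import Mathlib

open Set

noncomputable section

/-- `R : [1, n] → ℝ` is a one-dimensional polygonal curve with vertices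
`R 1, …, R n`: it is affine on each interval `[k, k+1]`. -/
def IsPoly1D (R : ℝ → ℝ) (n : ℕ) : Prop :=
  ∀ k : ℕ, 1 ≤ k → k < n → ∀ x ∈ Icc (k : ℝ) ((k : ℝ) + 1),
    R x = R (k : ℝ) + (x - (k : ℝ)) * (R ((k : ℝ) + 1) - R (k : ℝ))

/-- A reparameterization of `[a, b]`: a nondecreasing surjection `[0,1] → [a, b]`. -/
def IsRepar1 (f : ℝ → ℝ) (a b : ℝ) : Prop :=
  MonotoneOn f (Icc 0 1) ∧ MapsTo f (Icc 0 1) (Icc a b) ∧ SurjOn f (Icc 0 1) (Icc a b)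

/-- The cost of a matching `(f, g)` between one-dimensional curves. -/
def cost1 (R B : ℝ → ℝ) (f g : ℝ → ℝ) : ℝ :=
  sSup {c : ℝ | ∃ t ∈ Icc (0:ℝ) 1, c = |R (f t) - B (g t)|}

/-- The Fréchet distance between the subcurves `R|[a, b]` and `B|[c, d]` of
one-dimensional curves `R` and `B`. -/
def dF1 (R B : ℝ → ℝ) (a b c d : ℝ) : ℝ :=
  sInf {x : ℝ | ∃ f g : ℝ → ℝ, IsRepar1 f a b ∧ IsRepar1 g c d ∧ x = cost1 R B f g}

/-!
Because `R ≤ 0 ≤ B`, the distance `|R x - B y| = B y - R x` only shrinks when a point moves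
towards `0`, so the prefix maxima of `R` and the prefix minima of `B` serve as waypoints. A greedy
walk goes from `(1, 1)` to `(i, j)` through pairs `(k, l)` of such vertices: either it moves along
`R` to the first vertex `k'` after `k` with `R k ≤ R k'` while holding `B l`, or along `B` to the
first vertex `l'` after `l` with `B l' ≤ B l` while holding `R k`. The held point is a
prefix-minimum point, so only the cost has to be controlled. If the first move is too expensive,
i.e. `d_F < B l - R p` for the lowest vertex `p` before `k'`, then the second one is cheap: with `q`
the highest vertex before `l'`, every matching either reaches `R p` while `B` is still in `[1, q]`,
or reaches `B q` while `R` is still in `[1, p]`, whence `min (B l - R p) (B q - R k) ≤ d_F`.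
-/

namespace IsRepar1

variable {f g : ℝ → ℝ} {a b c d : ℝ}

lemma lineMap (h : a ≤ b) : IsRepar1 (AffineMap.lineMap a b) a b := by
  have himage : AffineMap.lineMap a b '' Icc (0:ℝ) 1 = Icc a b := by
    rw [← segment_eq_image_lineMap, segment_eq_Icc h]
  refine ⟨fun s _ t _ hst => ?_, himage ▸ mapsTo_image _ _, himage ▸ surjOn_image _ _⟩
  simp only [AffineMap.lineMap_apply_ring']
  gcongr

lemma const (a : ℝ) : IsRepar1 (fun _ => a) a a :=
  ⟨monotoneOn_const, fun _ _ => left_mem_Icc.2 le_rfl,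
    fun _ hx => ⟨0, left_mem_Icc.2 zero_le_one, le_antisymm hx.1 hx.2⟩⟩

lemma le (hf : IsRepar1 f a b) : a ≤ b :=
  (hf.2.1 (left_mem_Icc.2 zero_le_one)).1.trans (hf.2.1 (left_mem_Icc.2 zero_le_one)).2

lemma map_zero (hf : IsRepar1 f a b) : f 0 = a := by
  obtain ⟨t, ht, hft⟩ := hf.2.2 (left_mem_Icc.2 hf.le)
  have := hf.1 (left_mem_Icc.2 zero_le_one) ht ht.1
  exact le_antisymm (hft ▸ this) (hf.2.1 (left_mem_Icc.2 zero_le_one)).1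

lemma exists_crossing (hf : IsRepar1 f a b) (hg : IsRepar1 g c d) {p q : ℝ}
    (hp : p ∈ Icc a b) (hq : q ∈ Icc c d) :
    ∃ t ∈ Icc (0:ℝ) 1, (f t = p ∧ g t ∈ Icc c q) ∨ (f t ∈ Icc a p ∧ g t = q) := by
  obtain ⟨t₁, ht₁, rfl⟩ := hf.2.2 hp
  obtain ⟨t₂, ht₂, rfl⟩ := hg.2.2 hq
  rcases le_total t₁ t₂ with h | h
  · exact ⟨t₁, ht₁, Or.inl ⟨rfl, (hg.2.1 ht₁).1, hg.1 ht₁ ht₂ h⟩⟩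
  · exact ⟨t₂, ht₂, Or.inr ⟨⟨(hf.2.1 ht₂).1, hf.1 ht₂ ht₁ h⟩, rfl⟩⟩

end IsRepar1

def paramConcat (f₁ f₂ : ℝ → ℝ) : ℝ → ℝ :=
  fun t => if t ≤ 1 / 2 then f₁ (2 * t) else f₂ (2 * t - 1)

lemma exists_eq_paramConcat (f₁ f₂ g₁ g₂ : ℝ → ℝ) {t : ℝ} (ht : t ∈ Icc (0:ℝ) 1) :
    ∃ s ∈ Icc (0:ℝ) 1, (paramConcat f₁ f₂ t = f₁ s ∧ paramConcat g₁ g₂ t = g₁ s) ∨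
      (paramConcat f₁ f₂ t = f₂ s ∧ paramConcat g₁ g₂ t = g₂ s) := by
  by_cases h : t ≤ 1 / 2
  · exact ⟨2 * t, ⟨by linarith [ht.1], by linarith⟩,
      Or.inl (by simp only [paramConcat, if_pos h, and_self])⟩
  · exact ⟨2 * t - 1, ⟨by linarith, by linarith [ht.2]⟩,
      Or.inr (by simp only [paramConcat, if_neg h, and_self])⟩

lemma IsRepar1.paramConcat {f₁ f₂ : ℝ → ℝ} {a b c : ℝ} (h₁ : IsRepar1 f₁ a b)
    (h₂ : IsRepar1 f₂ b c) : IsRepar1 (paramConcat f₁ f₂) a c := by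
  have mem₁ {t : ℝ} (ht : t ∈ Icc (0:ℝ) 1) (h : t ≤ 1 / 2) : 2 * t ∈ Icc (0:ℝ) 1 :=
    ⟨by linarith [ht.1], by linarith⟩
  have mem₂ {t : ℝ} (ht : t ∈ Icc (0:ℝ) 1) (h : ¬t ≤ 1 / 2) : 2 * t - 1 ∈ Icc (0:ℝ) 1 :=
    ⟨by linarith [not_le.1 h], by linarith [ht.2]⟩
  refine ⟨fun s hs t ht hst => ?_, fun t ht => ?_, fun x hx => ?_⟩
  · unfold _root_.paramConcat
    by_cases hs' : s ≤ 1 / 2 <;> by_cases ht' : t ≤ 1 / 2 <;>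
      simp only [hs', ht', if_true, if_false]
    · exact h₁.1 (mem₁ hs hs') (mem₁ ht ht') (by linarith)
    · exact (h₁.2.1 (mem₁ hs hs')).2.trans (h₂.2.1 (mem₂ ht ht')).1
    · exact absurd (hst.trans ht') hs'
    · exact h₂.1 (mem₂ hs hs') (mem₂ ht ht') (by linarith)
  · unfold _root_.paramConcat
    split_ifs with h
    · exact Icc_subset_Icc_right h₂.le (h₁.2.1 (mem₁ ht h))
    · exact Icc_subset_Icc_left h₁.le (h₂.2.1 (mem₂ ht h))
  · rcases le_or_gt x b with hxb | hbx
    · obtain ⟨s, hs, hfs⟩ := h₁.2.2 ⟨hx.1, hxb⟩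
      refine ⟨s / 2, ⟨by linarith [hs.1], by linarith [hs.2]⟩, ?_⟩
      simp only [_root_.paramConcat, if_pos (show s / 2 ≤ 1 / 2 by linarith [hs.2])]
      rw [mul_div_cancel₀ s two_ne_zero, hfs]
    · obtain ⟨s, hs, hfs⟩ := h₂.2.2 ⟨hbx.le, hx.2⟩
      have hs0 : 0 < s := hs.1.lt_of_ne fun h => by rw [← h, h₂.map_zero] at hfs; linarith
      refine ⟨(s + 1) / 2, ⟨by linarith, by linarith [hs.2]⟩, ?_⟩
      simp only [_root_.paramConcat, if_neg (show ¬(s + 1) / 2 ≤ 1 / 2 by linarith)]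
      rw [mul_div_cancel₀ _ two_ne_zero, add_sub_cancel_right, hfs]

def Matchable (P : ℝ → ℝ → Prop) (a b c d : ℝ) : Prop :=
  ∃ f g : ℝ → ℝ, IsRepar1 f a b ∧ IsRepar1 g c d ∧ ∀ t ∈ Icc (0:ℝ) 1, P (f t) (g t)

namespace Matchable

variable {P : ℝ → ℝ → Prop} {a b c d e h : ℝ}

lemma trans (h₁ : Matchable P a b c d) (h₂ : Matchable P b e d h) : Matchable P a e c h := by
  obtain ⟨f₁, g₁, hf₁, hg₁, hP₁⟩ := h₁
  obtain ⟨f₂, g₂, hf₂, hg₂, hP₂⟩ := h₂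
  refine ⟨paramConcat f₁ f₂, paramConcat g₁ g₂, hf₁.paramConcat hf₂, hg₁.paramConcat hg₂,
    fun t ht => ?_⟩
  obtain ⟨s, hs, ⟨hf, hg⟩ | ⟨hf, hg⟩⟩ := exists_eq_paramConcat f₁ f₂ g₁ g₂ ht
  · exact hf ▸ hg ▸ hP₁ s hs
  · exact hf ▸ hg ▸ hP₂ s hs

lemma horizontal (hab : a ≤ b) (hP : ∀ x ∈ Icc a b, P x c) : Matchable P a b c c :=
  ⟨_, _, IsRepar1.lineMap hab, IsRepar1.const c, fun _ ht =>
    hP _ ((IsRepar1.lineMap hab).2.1 ht)⟩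

lemma vertical (hcd : c ≤ d) (hP : ∀ y ∈ Icc c d, P a y) : Matchable P a a c d :=
  ⟨_, _, IsRepar1.const a, IsRepar1.lineMap hcd, fun _ ht =>
    hP _ ((IsRepar1.lineMap hcd).2.1 ht)⟩

end Matchable

def EveryMatchingReaches (R B : ℝ → ℝ) (a b c d e : ℝ) : Prop :=
  ∀ f g : ℝ → ℝ, IsRepar1 f a b → IsRepar1 g c d → ∃ t ∈ Icc (0:ℝ) 1, e ≤ |R (f t) - B (g t)|

section LowerBounds

variable {R B : ℝ → ℝ} {a b c d e : ℝ}

lemma le_dF1 (hab : a ≤ b) (hcd : c ≤ d) (hR : ∃ C, ∀ x ∈ Icc a b, |R x| ≤ C)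
    (hB : ∃ C, ∀ y ∈ Icc c d, |B y| ≤ C) (he : EveryMatchingReaches R B a b c d e) :
    e ≤ dF1 R B a b c d := by
  obtain ⟨CR, hCR⟩ := hR
  obtain ⟨CB, hCB⟩ := hB
  refine le_csInf ⟨_, _, _, IsRepar1.lineMap hab, IsRepar1.lineMap hcd, rfl⟩ ?_
  rintro _ ⟨f, g, hf, hg, rfl⟩
  obtain ⟨t, ht, hte⟩ := he f g hf hg
  refine hte.trans (le_csSup ⟨CR + CB, ?_⟩ ⟨t, ht, rfl⟩)
  rintro _ ⟨s, hs, rfl⟩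
  exact (abs_sub _ _).trans (add_le_add (hCR _ (hf.2.1 hs)) (hCB _ (hg.2.1 hs)))

lemma everyMatchingReaches_of_left {p : ℝ} (hp : p ∈ Icc a b)
    (h : ∀ y ∈ Icc c d, e ≤ |R p - B y|) : EveryMatchingReaches R B a b c d e := by
  intro f g hf hg
  obtain ⟨t, ht, rfl⟩ := hf.2.2 hp
  exact ⟨t, ht, h _ (hg.2.1 ht)⟩

lemma everyMatchingReaches_of_right {q : ℝ} (hq : q ∈ Icc c d)
    (h : ∀ x ∈ Icc a b, e ≤ |R x - B q|) : EveryMatchingReaches R B a b c d e := by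
  intro f g hf hg
  obtain ⟨t, ht, rfl⟩ := hg.2.2 hq
  exact ⟨t, ht, h _ (hf.2.1 ht)⟩

lemma everyMatchingReaches_of_crossing {p q : ℝ} (hp : p ∈ Icc a b) (hq : q ∈ Icc c d)
    (hpq : ∀ y ∈ Icc c q, e ≤ |R p - B y|) (hqp : ∀ x ∈ Icc a p, e ≤ |R x - B q|) :
    EveryMatchingReaches R B a b c d e := by
  intro f g hf hg
  obtain ⟨t, ht, ⟨hft, hgt⟩ | ⟨hft, hgt⟩⟩ := hf.exists_crossing hg hp hq
  · exact ⟨t, ht, hft ▸ hpq _ hgt⟩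
  · exact ⟨t, ht, hgt ▸ hqp _ hft⟩

end LowerBounds

lemma exists_nat_mem_Icc_add_one {a b : ℕ} (hab : a < b) {x : ℝ} (hx : x ∈ Icc (a:ℝ) b) :
    ∃ k : ℕ, a ≤ k ∧ k < b ∧ x ∈ Icc (k:ℝ) (k + 1) := by
  have hfloor : a ≤ ⌊x⌋₊ := Nat.le_floor hx.1
  refine ⟨min ⌊x⌋₊ (b - 1), by omega, by omega, ?_, ?_⟩
  · exact (Nat.cast_le.2 (min_le_left _ _)).trans (Nat.floor_le ((Nat.cast_nonneg a).trans hx.1))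
  · rcases le_total ⌊x⌋₊ (b - 1) with h | h
    · rw [min_eq_left h]
      exact (Nat.lt_floor_add_one x).le
    · rw [min_eq_right h, Nat.cast_sub (by omega), Nat.cast_one, sub_add_cancel]
      exact hx.2

def IsPrefixMax (R : ℝ → ℝ) (x : ℝ) : Prop := ∀ x' ∈ Icc 1 x, R x' ≤ R x

def IsPrefixMin (B : ℝ → ℝ) (y : ℝ) : Prop := ∀ y' ∈ Icc 1 y, B y ≤ B y'

lemma isPrefixMax_neg {B : ℝ → ℝ} {y : ℝ} : IsPrefixMax (fun y => -B y) y ↔ IsPrefixMin B y := by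
  simp only [IsPrefixMax, IsPrefixMin, neg_le_neg_iff]

lemma exists_next_record {α : Type*} [LinearOrder α] (u : ℕ → α) {k i : ℕ} (hki : k < i)
    (hi : u k ≤ u i) : ∃ k', k < k' ∧ k' ≤ i ∧ u k ≤ u k' ∧ ∀ v, k < v → v < k' → u v < u k := by
  classical
  have hex : ∃ k', k < k' ∧ k' ≤ i ∧ u k ≤ u k' := ⟨i, hki, le_rfl, hi⟩
  obtain ⟨hk, hi, hle⟩ := Nat.find_spec hex
  refine ⟨Nat.find hex, hk, hi, hle, fun v hkv hv => ?_⟩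
  by_contra! h
  exact Nat.find_min hex hv ⟨hkv, by omega, h⟩

namespace IsPoly1D

variable {R : ℝ → ℝ} {n : ℕ}

lemma neg (hR : IsPoly1D R n) : IsPoly1D (fun x => -R x) n := fun k hk hkn x hx => by
  beta_reduce
  rw [hR k hk hkn x hx]
  ring

lemma exists_vertex_le (hR : IsPoly1D R n) {a b : ℕ} (ha : 1 ≤ a) (hb : b ≤ n) {x : ℝ}
    (hx : x ∈ Icc (a:ℝ) b) : ∃ v : ℕ, a ≤ v ∧ v ≤ b ∧ R v ≤ R x := by
  rcases (Nat.cast_le.1 (hx.1.trans hx.2)).eq_or_lt with rfl | hab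
  · exact ⟨a, le_rfl, le_rfl, (congrArg R (le_antisymm hx.2 hx.1)).ge⟩
  obtain ⟨k, hak, hkb, hxk⟩ := exists_nat_mem_Icc_add_one hab hx
  have hRx := hR k (ha.trans hak) (by omega) x hxk
  have h₀ : 0 ≤ x - k := sub_nonneg.2 hxk.1
  have h₁ : x - k ≤ 1 := by linarith [hxk.2]
  rcases le_total (R k) (R (k + 1)) with h | h
  · exact ⟨k, hak, hkb.le, by rw [hRx]; nlinarith⟩
  · exact ⟨k + 1, by omega, hkb, by push_cast; rw [hRx]; nlinarith⟩

lemma exists_le_vertex (hR : IsPoly1D R n) {a b : ℕ} (ha : 1 ≤ a) (hb : b ≤ n) {x : ℝ}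
    (hx : x ∈ Icc (a:ℝ) b) : ∃ v : ℕ, a ≤ v ∧ v ≤ b ∧ R x ≤ R v := by
  obtain ⟨v, hav, hvb, hv⟩ := hR.neg.exists_vertex_le ha hb hx
  exact ⟨v, hav, hvb, neg_le_neg_iff.1 hv⟩

lemma exists_abs_le (hR : IsPoly1D R n) : ∃ C, ∀ x ∈ Icc (1:ℝ) n, |R x| ≤ C := by
  refine ⟨∑ v ∈ Finset.Icc 1 n, |R v|, fun x hx => ?_⟩
  have hx' : x ∈ Icc ((1:ℕ):ℝ) n := by simpa using hx
  obtain ⟨v, hv1, hvn, hv⟩ := hR.exists_vertex_le le_rfl le_rfl hx'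
  obtain ⟨w, hw1, hwn, hw⟩ := hR.exists_le_vertex le_rfl le_rfl hx'
  have hsum {u : ℕ} (h1 : 1 ≤ u) (hn : u ≤ n) : |R u| ≤ ∑ v ∈ Finset.Icc 1 n, |R v| :=
    Finset.single_le_sum (f := fun v : ℕ => |R v|) (fun _ _ => abs_nonneg _)
      (Finset.mem_Icc.2 ⟨h1, hn⟩)
  exact (abs_le_max_abs_abs hv hw).trans (max_le (hsum hv1 hvn) (hsum hw1 hwn))

lemma exists_vertex_forall_le (hR : IsPoly1D R n) {a b : ℕ} (ha : 1 ≤ a) (hab : a < b)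
    (hb : b ≤ n) (hle : R a ≤ R b) : ∃ p : ℕ, a ≤ p ∧ p < b ∧ ∀ x ∈ Icc (a:ℝ) b, R p ≤ R x := by
  obtain ⟨p, hp, hmin⟩ := (Finset.Ico a b).exists_min_image (fun v : ℕ => R v)
    ⟨a, Finset.mem_Ico.2 ⟨le_rfl, hab⟩⟩
  rw [Finset.mem_Ico] at hp
  refine ⟨p, hp.1, hp.2, fun x hx => ?_⟩
  obtain ⟨v, hav, hvb, hvx⟩ := hR.exists_vertex_le ha hb hx
  refine le_trans ?_ hvx
  rcases hvb.lt_or_eq with hvb | rfl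
  · exact hmin v (Finset.mem_Ico.2 ⟨hav, hvb⟩)
  · exact (hmin a (Finset.mem_Ico.2 ⟨le_rfl, hab⟩)).trans hle

lemma le_of_forall_vertex_le (hR : IsPoly1D R n) {k b : ℕ} (hk : 1 ≤ k) (hb : b ≤ n) {c : ℝ}
    (hpre : ∀ x ∈ Icc (1:ℝ) k, R x ≤ c) (hv : ∀ v : ℕ, k < v → v ≤ b → R v ≤ c) :
    ∀ x ∈ Icc (1:ℝ) b, R x ≤ c := by
  intro x hx
  rcases le_total x k with hxk | hkx
  · exact hpre x ⟨hx.1, hxk⟩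
  obtain ⟨v, hkv, hvb, hxv⟩ := hR.exists_le_vertex hk hb ⟨hkx, hx.2⟩
  rcases hkv.eq_or_lt with rfl | hkv
  · exact hxv.trans (hpre _ ⟨by exact_mod_cast hk, le_rfl⟩)
  · exact hxv.trans (hv v hkv hvb)

lemma isPrefixMax_of_next_record (hR : IsPoly1D R n) {k k' : ℕ} (hk : 1 ≤ k) (hk' : k' ≤ n)
    (hpk : IsPrefixMax R k) (hbetween : ∀ v : ℕ, k < v → v < k' → R v < R k)
    (hle : R k ≤ R k') : IsPrefixMax R k' :=
  hR.le_of_forall_vertex_le hk hk' (fun x hx => (hpk x hx).trans hle) fun v hkv hvk' =>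
    hvk'.lt_or_eq.elim (fun h => (hbetween v hkv h).le.trans hle) fun h => h ▸ le_rfl

lemma le_of_lt_next_record (hR : IsPoly1D R n) {k k' p : ℕ} (hk : 1 ≤ k) (hk' : k' ≤ n)
    (hpk : IsPrefixMax R k) (hbetween : ∀ v : ℕ, k < v → v < k' → R v < R k) (hp : p < k') :
    ∀ x ∈ Icc (1:ℝ) p, R x ≤ R k :=
  hR.le_of_forall_vertex_le hk (hp.le.trans hk') hpk fun v hkv hvp =>
    (hbetween v hkv (hvp.trans_lt hp)).le

end IsPoly1D

def IsPrefixMinimaPair (R B : ℝ → ℝ) (D x y : ℝ) : Prop :=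
  |R x - B y| ≤ D ∧ (IsPrefixMax R x ∨ IsPrefixMin B y)

lemma abs_sub_eq_of_le {α : Type*} [AddCommGroup α] [LinearOrder α] [IsOrderedAddMonoid α]
    {a b : α} (h : a ≤ b) : |a - b| = b - a := by
  rw [abs_sub_comm, abs_of_nonneg (sub_nonneg.2 h)]

section Greedy

variable {R B : ℝ → ℝ} {n m i j : ℕ} {D : ℝ}

lemma abs_sub_le_of_isPrefixMax (hsep : ∀ x ∈ Icc (1:ℝ) i, ∀ y ∈ Icc (1:ℝ) j, R x ≤ B y)
    (hD : ∀ e, EveryMatchingReaches R B 1 i 1 j e → e ≤ D) (hi : 1 ≤ i) (hpi : IsPrefixMax R i)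
    {y : ℝ} (hy : y ∈ Icc (1:ℝ) j) : |R i - B y| ≤ D := by
  rw [abs_sub_eq_of_le (hsep _ ⟨by exact_mod_cast hi, le_rfl⟩ y hy)]
  refine hD _ (everyMatchingReaches_of_right hy fun x hx => ?_)
  rw [abs_sub_eq_of_le (hsep x hx y hy)]
  linarith [hpi x hx]

lemma abs_sub_le_of_isPrefixMin (hsep : ∀ x ∈ Icc (1:ℝ) i, ∀ y ∈ Icc (1:ℝ) j, R x ≤ B y)
    (hD : ∀ e, EveryMatchingReaches R B 1 i 1 j e → e ≤ D) (hj : 1 ≤ j) (hpj : IsPrefixMin B j)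
    {x : ℝ} (hx : x ∈ Icc (1:ℝ) i) : |R x - B j| ≤ D := by
  rw [abs_sub_eq_of_le (hsep x hx _ ⟨by exact_mod_cast hj, le_rfl⟩)]
  refine hD _ (everyMatchingReaches_of_left hx fun y hy => ?_)
  rw [abs_sub_eq_of_le (hsep x hx y hy)]
  linarith [hpj y hy]

lemma min_sub_le_of_crossing (hsep : ∀ x ∈ Icc (1:ℝ) i, ∀ y ∈ Icc (1:ℝ) j, R x ≤ B y)
    (hD : ∀ e, EveryMatchingReaches R B 1 i 1 j e → e ≤ D) {p q cR cB : ℝ}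
    (hp : p ∈ Icc (1:ℝ) i) (hq : q ∈ Icc (1:ℝ) j) (hcR : ∀ x ∈ Icc 1 p, R x ≤ cR)
    (hcB : ∀ y ∈ Icc 1 q, cB ≤ B y) : min (cB - R p) (B q - cR) ≤ D := by
  refine hD _ (everyMatchingReaches_of_crossing hp hq (fun y hy => ?_) fun x hx => ?_)
  · rw [abs_sub_eq_of_le (hsep p hp y (Icc_subset_Icc_right hq.2 hy))]
    linarith [min_le_left (cB - R p) (B q - cR), hcB y hy]
  · rw [abs_sub_eq_of_le (hsep x (Icc_subset_Icc_right hp.2 hx) q hq)]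
    linarith [min_le_right (cB - R p) (B q - cR), hcR x hx]

lemma exists_greedy_step (hR : IsPoly1D R n) (hB : IsPoly1D B m) (hin : i ≤ n) (hjm : j ≤ m)
    (hsep : ∀ x ∈ Icc (1:ℝ) i, ∀ y ∈ Icc (1:ℝ) j, R x ≤ B y)
    (hD : ∀ e, EveryMatchingReaches R B 1 i 1 j e → e ≤ D) (hpi : IsPrefixMax R i)
    (hpj : IsPrefixMin B j) {k l : ℕ} (hk : 1 ≤ k) (hki : k < i) (hl : 1 ≤ l) (hlj : l < j)
    (hpk : IsPrefixMax R k) (hpl : IsPrefixMin B l) :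
    ∃ k' l' : ℕ, k ≤ k' ∧ k' ≤ i ∧ l ≤ l' ∧ l' ≤ j ∧ k + l < k' + l' ∧
      IsPrefixMax R k' ∧ IsPrefixMin B l' ∧ Matchable (IsPrefixMinimaPair R B D) k k' l l' := by
  have hk' : (1:ℝ) ≤ k := by exact_mod_cast hk
  have hl' : (1:ℝ) ≤ l := by exact_mod_cast hl
  have hki' : (k:ℝ) ≤ i := by exact_mod_cast hki.le
  have hlj' : (l:ℝ) ≤ j := by exact_mod_cast hlj.le
  obtain ⟨k', hkk', hk'i, hRk', hRbetween⟩ :=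
    exists_next_record (fun v : ℕ => R v) hki (hpi k ⟨hk', hki'⟩)
  obtain ⟨l', hll', hl'j, hBl', hBbetween⟩ :=
    exists_next_record (fun v : ℕ => -B v) hlj (neg_le_neg (hpj l ⟨hl', hlj'⟩))
  obtain ⟨p, hkp, hpk', hRp⟩ := hR.exists_vertex_forall_le hk hkk' (hk'i.trans hin) hRk'
  obtain ⟨q, hlq, hql', hBq⟩ := hB.neg.exists_vertex_forall_le hl hll' (hl'j.trans hjm) hBl'
  have hpl' : IsPrefixMax (fun y => -B y) l := isPrefixMax_neg.2 hpl
  by_cases hcheap : B l - R p ≤ D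
  · refine ⟨k', l, hkk'.le, hk'i, le_rfl, hlj.le, by omega,
      hR.isPrefixMax_of_next_record hk (hk'i.trans hin) hpk hRbetween hRk', hpl,
      Matchable.horizontal (by exact_mod_cast hkk'.le) fun x hx => ⟨?_, Or.inr hpl⟩⟩
    have hx' : x ∈ Icc (1:ℝ) i := ⟨hk'.trans hx.1, hx.2.trans (by exact_mod_cast hk'i)⟩
    rw [abs_sub_eq_of_le (hsep x hx' l ⟨hl', hlj'⟩)]
    linarith [hRp x hx]
  have hcross := min_sub_le_of_crossing hsep hD (cR := R k) (cB := B l)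
    ⟨hk'.trans (by exact_mod_cast hkp), by exact_mod_cast (hpk'.trans_le hk'i).le⟩
    ⟨hl'.trans (by exact_mod_cast hlq), by exact_mod_cast (hql'.trans_le hl'j).le⟩
    (hR.le_of_lt_next_record hk (hk'i.trans hin) hpk hRbetween hpk') fun y hy =>
      neg_le_neg_iff.1 (hB.neg.le_of_lt_next_record hl (hl'j.trans hjm) hpl' hBbetween hql' y hy)
  have hcheap' : B q - R k ≤ D := (min_le_iff.1 hcross).resolve_left hcheap
  refine ⟨k, l', le_rfl, hki.le, hll'.le, hl'j, by omega, hpk,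
    isPrefixMax_neg.1 (hB.neg.isPrefixMax_of_next_record hl (hl'j.trans hjm) hpl' hBbetween hBl'),
    Matchable.vertical (by exact_mod_cast hll'.le) fun y hy => ⟨?_, Or.inl hpk⟩⟩
  have hy' : y ∈ Icc (1:ℝ) j := ⟨hl'.trans hy.1, hy.2.trans (by exact_mod_cast hl'j)⟩
  rw [abs_sub_eq_of_le (hsep k ⟨hk', hki'⟩ y hy')]
  linarith [hBq y hy]

theorem matchable_of_isPrefixMax_of_isPrefixMin (hR : IsPoly1D R n) (hB : IsPoly1D B m)
    (hin : i ≤ n) (hjm : j ≤ m) (hsep : ∀ x ∈ Icc (1:ℝ) i, ∀ y ∈ Icc (1:ℝ) j, R x ≤ B y)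
    (hD : ∀ e, EveryMatchingReaches R B 1 i 1 j e → e ≤ D) (hpi : IsPrefixMax R i)
    (hpj : IsPrefixMin B j) {k l : ℕ} (hk : 1 ≤ k) (hki : k ≤ i) (hl : 1 ≤ l) (hlj : l ≤ j)
    (hpk : IsPrefixMax R k) (hpl : IsPrefixMin B l) :
    Matchable (IsPrefixMinimaPair R B D) k i l j := by
  induction hN : i - k + (j - l) using Nat.strong_induction_on generalizing k l with
  | _ N ih =>
  rcases hki.eq_or_lt with rfl | hki
  · exact Matchable.vertical (by exact_mod_cast hlj) fun y hy =>
      ⟨abs_sub_le_of_isPrefixMax hsep hD hk hpi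
        ⟨(Nat.one_le_cast.2 hl).trans hy.1, hy.2⟩, Or.inl hpi⟩
  rcases hlj.eq_or_lt with rfl | hlj
  · exact Matchable.horizontal (by exact_mod_cast hki.le) fun x hx =>
      ⟨abs_sub_le_of_isPrefixMin hsep hD hl hpj
        ⟨(Nat.one_le_cast.2 hk).trans hx.1, hx.2⟩, Or.inr hpj⟩
  obtain ⟨k', l', hkk', hk'i, hll', hl'j, hprogress, hpk', hpl', hstep⟩ :=
    exists_greedy_step hR hB hin hjm hsep hD hpi hpj hk hki hl hlj hpk hpl
  exact hstep.trans (ih _ (by omega) (hk.trans hkk') hk'i (hl.trans hll') hl'j hpk' hpl' rfl)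

end Greedy

theorem exists_prefix_minima_matching_general
    (n m : ℕ)
    (R B : ℝ → ℝ) (hR : IsPoly1D R n) (hB : IsPoly1D B m)
    (hsepR : ∀ x ∈ Icc (1:ℝ) n, R x ≤ 0) (hsepB : ∀ y ∈ Icc (1:ℝ) m, 0 ≤ B y)
    (i j : ℕ) (hi1 : 1 ≤ i) (hin : i ≤ n) (hj1 : 1 ≤ j) (hjm : j ≤ m)
    (hpi : ∀ x ∈ Icc (1:ℝ) (i : ℝ), |R (i : ℝ)| ≤ |R x|)
    (hpj : ∀ y ∈ Icc (1:ℝ) (j : ℝ), |B (j : ℝ)| ≤ |B y|) :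
    ∃ f g : ℝ → ℝ, IsRepar1 f 1 (i : ℝ) ∧ IsRepar1 g 1 (j : ℝ) ∧
      (∀ t ∈ Icc (0:ℝ) 1, |R (f t) - B (g t)| ≤ dF1 R B 1 (i : ℝ) 1 (j : ℝ)) ∧
      ∀ t ∈ Icc (0:ℝ) 1,
        (∀ x ∈ Icc (1:ℝ) (f t), R x ≤ R (f t)) ∨
        (∀ y ∈ Icc (1:ℝ) (g t), B (g t) ≤ B y) := by
  have hRi : ∀ x ∈ Icc (1:ℝ) i, R x ≤ 0 :=
    fun x hx => hsepR x (Icc_subset_Icc_right (by exact_mod_cast hin) hx)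
  have hBj : ∀ y ∈ Icc (1:ℝ) j, 0 ≤ B y :=
    fun y hy => hsepB y (Icc_subset_Icc_right (by exact_mod_cast hjm) hy)
  have hi : (i:ℝ) ∈ Icc (1:ℝ) i := ⟨by exact_mod_cast hi1, le_rfl⟩
  have hj : (j:ℝ) ∈ Icc (1:ℝ) j := ⟨by exact_mod_cast hj1, le_rfl⟩
  have hpi' : IsPrefixMax R i := fun x hx => by
    simpa [abs_of_nonpos (hRi _ hi), abs_of_nonpos (hRi x hx)] using hpi x hx
  have hpj' : IsPrefixMin B j := fun y hy => by
    simpa [abs_of_nonneg (hBj _ hj), abs_of_nonneg (hBj y hy)] using hpj y hy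
  have hD (e : ℝ) (he : EveryMatchingReaches R B 1 i 1 j e) : e ≤ dF1 R B 1 i 1 j := by
    obtain ⟨CR, hCR⟩ := hR.exists_abs_le
    obtain ⟨CB, hCB⟩ := hB.exists_abs_le
    exact le_dF1 hi.1 hj.1 ⟨CR, fun x hx => hCR x (Icc_subset_Icc_right (by exact_mod_cast hin) hx)⟩
      ⟨CB, fun y hy => hCB y (Icc_subset_Icc_right (by exact_mod_cast hjm) hy)⟩ he
  obtain ⟨f, g, hf, hg, hfg⟩ := matchable_of_isPrefixMax_of_isPrefixMin hR hB hin hjm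
    (fun x hx y hy => (hRi x hx).trans (hBj y hy)) hD hpi' hpj' le_rfl hi1 le_rfl hj1
    (by simp [IsPrefixMax]) (by simp [IsPrefixMin])
  exact ⟨f, g, by simpa using hf, by simpa using hg, fun t ht => (hfg t ht).1,
    fun t ht => (hfg t ht).2⟩

/-- For prefix-minimum vertices `R i` and `B j` there is a
prefix-minima Fréchet matching between `R|[1, i]` and `B|[1, j]`: a matching of
cost at most `d_F(R|[1,i], B|[1,j])` such that at each time, at least one of the
two matched points is a prefix-minimum point of its curve. -/
theorem exists_prefix_minima_matching
    (n m : ℕ) (hn : 1 ≤ n) (hm : 1 ≤ m)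
    (R B : ℝ → ℝ) (hR : IsPoly1D R n) (hB : IsPoly1D B m)
    (hsepR : ∀ x ∈ Icc (1:ℝ) n, R x ≤ 0) (hsepB : ∀ y ∈ Icc (1:ℝ) m, 0 ≤ B y)
    (i j : ℕ) (hi1 : 1 ≤ i) (hin : i ≤ n) (hj1 : 1 ≤ j) (hjm : j ≤ m)
    (hpi : ∀ x ∈ Icc (1:ℝ) (i : ℝ), |R (i : ℝ)| ≤ |R x|)
    (hpj : ∀ y ∈ Icc (1:ℝ) (j : ℝ), |B (j : ℝ)| ≤ |B y|) :
    ∃ f g : ℝ → ℝ, IsRepar1 f 1 (i : ℝ) ∧ IsRepar1 g 1 (j : ℝ) ∧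
      (∀ t ∈ Icc (0:ℝ) 1, |R (f t) - B (g t)| ≤ dF1 R B 1 (i : ℝ) 1 (j : ℝ)) ∧
      ∀ t ∈ Icc (0:ℝ) 1,
        (∀ x ∈ Icc (1:ℝ) (f t), R x ≤ R (f t)) ∨
        (∀ y ∈ Icc (1:ℝ) (g t), B (g t) ≤ B y) :=
  exists_prefix_minima_matching_general n m R B hR hB hsepR hsepB i j hi1 hin hj1 hjm hpi hpj
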